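/- Under the same assumptions as the Lipschitz-invariance result for the Bellman–Isaacs operator 𝒯 (𝔓⁰ compact, F̄ Lipschitz, r̄ bounded and Lipschitz, β ∈ [0, min(1, 1/(2C̄_F)))), 𝒯 is a β-contraction in the supremum norm on the set Lip_{b,L̄}(P(S);ℝ) of bounded L̄-Lipschitz functions: for all V̄¹, V̄² in this set, ‖𝒯V̄¹ − 𝒯V̄²‖_∞ ≤ β·‖V̄¹ − V̄²‖_∞. -/

import Mathlib

open MeasureTheory

/-- 1-Wasserstein distance between two (probability) measures on a metric measurable
space, defined as the infimum over all couplings of the mean distance. -/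
noncomputable def W1 {X : Type*} [MeasurableSpace X] [PseudoMetricSpace X]
    (μ ν : Measure X) : ℝ :=
  sInf {r : ℝ | ∃ γ : Measure (X × X), IsProbabilityMeasure γ ∧
    γ.map Prod.fst = μ ∧ γ.map Prod.snd = ν ∧ r = ∫ p, dist p.1 p.2 ∂γ}

/-- 1-Wasserstein distance on `P(S × A)` where `S × A` carries the sum metric
`d_{S×A}((s,a),(s',a')) = d_S(s,s') + d_A(a,a')`. -/
noncomputable def W1sum {S A : Type*} [MeasurableSpace S] [PseudoMetricSpace S]
    [MeasurableSpace A] [PseudoMetricSpace A] (Λ Λ' : Measure (S × A)) : ℝ :=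
  sInf {r : ℝ | ∃ γ : Measure ((S × A) × (S × A)), IsProbabilityMeasure γ ∧
    γ.map Prod.fst = Λ ∧ γ.map Prod.snd = Λ' ∧
    r = ∫ q, (dist q.1.1 q.2.1 + dist q.1.2 q.2.2) ∂γ}

/-- The Bellman–Isaacs operator
`(𝒯V̄)(μ) = sup_{Λ ∈ 𝔘(μ)} { r̄(μ,Λ) + β inf_{p ∈ 𝔓⁰} ∫ V̄(F̄(μ,Λ,e⁰)) dp(e⁰) }`,
where the inner integral is `∫ V̄ dp̄(·|μ,Λ,p)` for `p̄(·|μ,Λ,p)` the pushforward of `p`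
by `e⁰ ↦ F̄(μ,Λ,e⁰)`. -/
noncomputable def BellmanT {S A E0 : Type*}
    [MeasurableSpace S] [PseudoMetricSpace S] [MeasurableSpace A] [PseudoMetricSpace A]
    [MeasurableSpace E0]
    (P0 : Set (ProbabilityMeasure E0)) (β : ℝ)
    (rbar : ProbabilityMeasure S → ProbabilityMeasure (S × A) → ℝ)
    (Fbar : ProbabilityMeasure S → ProbabilityMeasure (S × A) → E0 → ProbabilityMeasure S)
    (V : ProbabilityMeasure S → ℝ) (μ : ProbabilityMeasure S) : ℝ :=
  ⨆ Λ : {Λ : ProbabilityMeasure (S × A) //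
      (Λ : Measure (S × A)).map Prod.fst = (μ : Measure S)},
    (rbar μ Λ.1 + β * ⨅ p : P0, ∫ e0, V (Fbar μ Λ.1 e0) ∂(p.1 : Measure E0))

/-! `𝒯V̄(μ) = ⨆ Λ, (r̄(μ,Λ) + β ⨅ p, ∫ V̄(F̄(μ,Λ,e⁰)) dp(e⁰))`, and each of these operations
moves values by at most the uniform distance of its inputs: `|⨆ f - ⨆ g| ≤ sup |f - g|`,
likewise for `⨅`, and `|∫ V̄¹ dν - ∫ V̄² dν| ≤ ‖V̄¹ - V̄²‖_∞` for a probability measure `ν`.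
Integrability, needed for the last step, holds since `e⁰ ↦ V̄(F̄(μ,Λ,e⁰))` is Lipschitz:
`W1sum Λ Λ = 0` reduces the Lipschitz bound on `F̄` to one in `e⁰` alone. -/

section SupInf

variable {ι : Sort*} {f g : ι → ℝ} {C : ℝ}

-- Junk values make this hold without boundedness: if `g` is unbounded above, so is `f`,
-- and then both suprema are `0`.
lemma iSup_le_iSup_add_of_abs_sub_le (hC : 0 ≤ C) (h : ∀ i, |f i - g i| ≤ C) :
    ⨆ i, f i ≤ (⨆ i, g i) + C := by
  rcases isEmpty_or_nonempty ι with _ | _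
  · simpa using hC
  by_cases hg : BddAbove (Set.range g)
  · exact ciSup_le fun i => by linarith [(abs_le.1 (h i)).2, le_ciSup hg i]
  · have hf : ¬BddAbove (Set.range f) := fun ⟨M, hM⟩ => hg ⟨M + C, by
      rintro _ ⟨i, rfl⟩
      linarith [(abs_le.1 (h i)).1, hM ⟨i, rfl⟩]⟩
    simpa [Real.iSup_of_not_bddAbove hf, Real.iSup_of_not_bddAbove hg] using hC

lemma abs_iSup_sub_iSup_le (hC : 0 ≤ C) (h : ∀ i, |f i - g i| ≤ C) :
    |(⨆ i, f i) - ⨆ i, g i| ≤ C := by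
  have hgf : ∀ i, |g i - f i| ≤ C := fun i => abs_sub_comm (g i) (f i) ▸ h i
  rw [abs_sub_le_iff]
  constructor
  · linarith [iSup_le_iSup_add_of_abs_sub_le hC h]
  · linarith [iSup_le_iSup_add_of_abs_sub_le hC hgf]

lemma Real.iInf_eq_neg_iSup_neg (f : ι → ℝ) : ⨅ i, f i = -⨆ i, -f i := by
  rw [iSup, ← Set.neg_range, Real.sSup_neg, neg_neg, iInf]

lemma abs_iInf_sub_iInf_le (hC : 0 ≤ C) (h : ∀ i, |f i - g i| ≤ C) :
    |(⨅ i, f i) - ⨅ i, g i| ≤ C := by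
  rw [Real.iInf_eq_neg_iSup_neg f, Real.iInf_eq_neg_iSup_neg g, neg_sub_neg, abs_sub_comm]
  exact abs_iSup_sub_iSup_le hC fun i => by rw [neg_sub_neg, abs_sub_comm]; exact h i

end SupInf

lemma abs_integral_sub_integral_le {α : Type*} [MeasurableSpace α] {μ : Measure α}
    [IsProbabilityMeasure μ] {f g : α → ℝ} (hf : Integrable f μ) (hg : Integrable g μ) {C : ℝ}
    (h : ∀ x, |f x - g x| ≤ C) : |∫ x, f x ∂μ - ∫ x, g x ∂μ| ≤ C := by
  rw [← integral_sub hf hg]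
  simpa using norm_integral_le_of_norm_le_const (μ := μ) (f := fun x => f x - g x) (ae_of_all _ h)

section Wasserstein

lemma W1_nonneg {X : Type*} [MeasurableSpace X] [PseudoMetricSpace X] (μ ν : Measure X) :
    0 ≤ W1 μ ν :=
  Real.sInf_nonneg <| by
    rintro _ ⟨γ, -, -, -, rfl⟩
    exact integral_nonneg fun _ => dist_nonneg

lemma W1sum_self {S A : Type*} [MeasurableSpace S] [PseudoMetricSpace S]
    [MeasurableSpace A] [PseudoMetricSpace A] [OpensMeasurableSpace S] [OpensMeasurableSpace A]
    [SecondCountableTopology S] [SecondCountableTopology A]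
    (Λ : Measure (S × A)) [IsProbabilityMeasure Λ] : W1sum Λ Λ = 0 := by
  have hdiag : Measurable (fun x : S × A => (x, x)) := measurable_id.prodMk measurable_id
  unfold W1sum
  refine le_antisymm (csInf_le ⟨0, ?_⟩ ?_) (Real.sInf_nonneg ?_)
  on_goal 2 =>
    refine ⟨Λ.map (fun x => (x, x)), Measure.isProbabilityMeasure_map hdiag.aemeasurable,
      ?_, ?_, ?_⟩
    · rw [Measure.map_map measurable_fst hdiag]
      exact Measure.map_id
    · rw [Measure.map_map measurable_snd hdiag]
      exact Measure.map_id
    · rw [integral_map hdiag.aemeasurable (Continuous.aestronglyMeasurable (by fun_prop))]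
      simp
  all_goals
    rintro _ ⟨γ, -, -, -, rfl⟩
    exact integral_nonneg fun q => by positivity

variable {X E : Type*} [MeasurableSpace X] [PseudoMetricSpace X] [PseudoMetricSpace E]
  {F : E → ProbabilityMeasure X} {CF L : ℝ} {V : ProbabilityMeasure X → ℝ}

lemma lipschitzWith_comp_of_W1_le (hF : ∀ e e', W1 (F e : Measure X) (F e') ≤ CF * dist e e')
    (hV : ∀ ν ν' : ProbabilityMeasure X, |V ν - V ν'| ≤ L * W1 (ν : Measure X) ν') :
    LipschitzWith (|L| * CF).toNNReal (V ∘ F) :=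
  LipschitzWith.of_dist_le' fun e e' =>
    calc |V (F e) - V (F e')|
        ≤ L * W1 (F e : Measure X) (F e') := hV _ _
      _ ≤ |L| * W1 (F e : Measure X) (F e') :=
          mul_le_mul_of_nonneg_right (le_abs_self L) (W1_nonneg _ _)
      _ ≤ |L| * (CF * dist e e') := mul_le_mul_of_nonneg_left (hF e e') (abs_nonneg L)
      _ = |L| * CF * dist e e' := (mul_assoc _ _ _).symm

lemma integrable_comp_of_W1_le [MeasurableSpace E] [OpensMeasurableSpace E]
    (hF : ∀ e e', W1 (F e : Measure X) (F e') ≤ CF * dist e e')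
    (hV : ∀ ν ν' : ProbabilityMeasure X, |V ν - V ν'| ≤ L * W1 (ν : Measure X) ν')
    {M : ℝ} (hVM : ∀ ν, |V ν| ≤ M) (p : Measure E) [IsFiniteMeasure p] :
    Integrable (fun e => V (F e)) p :=
  Integrable.of_bound (lipschitzWith_comp_of_W1_le hF hV).continuous.aestronglyMeasurable M
    (ae_of_all _ fun e => hVM (F e))

end Wasserstein

theorem stmt_10_general {S A E0 : Type*}
    [MetricSpace S] [CompactSpace S] [MeasurableSpace S] [BorelSpace S]
    [MetricSpace A] [CompactSpace A] [MeasurableSpace A] [BorelSpace A]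
    [MetricSpace E0] [MeasurableSpace E0] [BorelSpace E0]
    (P0 : Set (ProbabilityMeasure E0))
    (Fbar : ProbabilityMeasure S → ProbabilityMeasure (S × A) → E0 → ProbabilityMeasure S)
    (CF : ℝ)
    (hFlip : ∀ (μ μ' : ProbabilityMeasure S) (Λ Λ' : ProbabilityMeasure (S × A)) (e0 e0' : E0),
      (Λ : Measure (S × A)).map Prod.fst = (μ : Measure S) →
      (Λ' : Measure (S × A)).map Prod.fst = (μ' : Measure S) →
      W1 (Fbar μ Λ e0 : Measure S) (Fbar μ' Λ' e0' : Measure S) ≤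
        CF * (2 * W1sum (Λ : Measure (S × A)) (Λ' : Measure (S × A)) + dist e0 e0'))
    (rbar : ProbabilityMeasure S → ProbabilityMeasure (S × A) → ℝ)
    (β : ℝ) (hβ0 : 0 ≤ β)
    (L : ℝ)
    (V1 V2 : ProbabilityMeasure S → ℝ)
    (hV1b : ∃ M, ∀ μ, |V1 μ| ≤ M)
    (hV1lip : ∀ μ μ' : ProbabilityMeasure S,
      |V1 μ - V1 μ'| ≤ L * W1 (μ : Measure S) (μ' : Measure S))
    (hV2b : ∃ M, ∀ μ, |V2 μ| ≤ M)
    (hV2lip : ∀ μ μ' : ProbabilityMeasure S,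
      |V2 μ - V2 μ'| ≤ L * W1 (μ : Measure S) (μ' : Measure S)) :
    (⨆ μ : ProbabilityMeasure S, |BellmanT P0 β rbar Fbar V1 μ - BellmanT P0 β rbar Fbar V2 μ|)
      ≤ β * ⨆ μ : ProbabilityMeasure S, |V1 μ - V2 μ| := by
  obtain ⟨M1, hM1⟩ := hV1b
  obtain ⟨M2, hM2⟩ := hV2b
  set D := ⨆ μ : ProbabilityMeasure S, |V1 μ - V2 μ|
  have hD : ∀ μ, |V1 μ - V2 μ| ≤ D := le_ciSup ⟨M1 + M2, by
    rintro _ ⟨μ, rfl⟩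
    exact (abs_sub _ _).trans (add_le_add (hM1 μ) (hM2 μ))⟩
  have hD0 : 0 ≤ D := Real.iSup_nonneg fun _ => abs_nonneg _
  refine Real.iSup_le (fun μ => ?_) (mul_nonneg hβ0 hD0)
  unfold BellmanT
  refine abs_iSup_sub_iSup_le (mul_nonneg hβ0 hD0) fun Λ => ?_
  have hF : ∀ e e', W1 (Fbar μ Λ e : Measure S) (Fbar μ Λ e') ≤ CF * dist e e' := fun e e' => by
    simpa [W1sum_self] using hFlip μ μ Λ Λ e e' Λ.2 Λ.2
  rw [add_sub_add_left_eq_sub, ← mul_sub, abs_mul, abs_of_nonneg hβ0]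
  refine mul_le_mul_of_nonneg_left (abs_iInf_sub_iInf_le hD0 fun p => ?_) hβ0
  exact abs_integral_sub_integral_le (integrable_comp_of_W1_le hF hV1lip hM1 _)
    (integrable_comp_of_W1_le hF hV2lip hM2 _) fun e => hD _

/-- the Bellman–Isaacs operator `𝒯` is a `β`-contraction in supremum norm
on the set of bounded `L̄`-Lipschitz functions on `P(S)`:
`‖𝒯V̄¹ − 𝒯V̄²‖_∞ ≤ β ‖V̄¹ − V̄²‖_∞`. -/
theorem stmt_10 {S A E0 : Type*}
    [MetricSpace S] [CompactSpace S] [MeasurableSpace S] [BorelSpace S] [Nonempty S]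
    [MetricSpace A] [CompactSpace A] [MeasurableSpace A] [BorelSpace A] [Nonempty A]
    [MetricSpace E0] [MeasurableSpace E0] [BorelSpace E0] [PolishSpace E0]
    (P0 : Set (ProbabilityMeasure E0)) (hP0ne : P0.Nonempty) (hP0cp : IsCompact P0)
    (Fbar : ProbabilityMeasure S → ProbabilityMeasure (S × A) → E0 → ProbabilityMeasure S)
    (CF : ℝ) (hCF : 0 < CF)
    (hFlip : ∀ (μ μ' : ProbabilityMeasure S) (Λ Λ' : ProbabilityMeasure (S × A)) (e0 e0' : E0),
      (Λ : Measure (S × A)).map Prod.fst = (μ : Measure S) →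
      (Λ' : Measure (S × A)).map Prod.fst = (μ' : Measure S) →
      W1 (Fbar μ Λ e0 : Measure S) (Fbar μ' Λ' e0' : Measure S) ≤
        CF * (2 * W1sum (Λ : Measure (S × A)) (Λ' : Measure (S × A)) + dist e0 e0'))
    (rbar : ProbabilityMeasure S → ProbabilityMeasure (S × A) → ℝ)
    (Cr : ℝ) (hCr : 0 < Cr)
    (hrb : ∃ M, ∀ (μ : ProbabilityMeasure S) (Λ : ProbabilityMeasure (S × A)),
      (Λ : Measure (S × A)).map Prod.fst = (μ : Measure S) → |rbar μ Λ| ≤ M)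
    (hrlip : ∀ (μ μ' : ProbabilityMeasure S) (Λ Λ' : ProbabilityMeasure (S × A)),
      (Λ : Measure (S × A)).map Prod.fst = (μ : Measure S) →
      (Λ' : Measure (S × A)).map Prod.fst = (μ' : Measure S) →
      |rbar μ Λ - rbar μ' Λ'| ≤ 2 * Cr * W1sum (Λ : Measure (S × A)) (Λ' : Measure (S × A)))
    (β : ℝ) (hβ0 : 0 ≤ β) (hβ1 : β < min 1 (1 / (2 * CF)))
    (L : ℝ) (hLlb : 2 * Cr / (1 - 2 * β * CF) ≤ L)
    (V1 V2 : ProbabilityMeasure S → ℝ)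
    (hV1b : ∃ M, ∀ μ, |V1 μ| ≤ M)
    (hV1lip : ∀ μ μ' : ProbabilityMeasure S,
      |V1 μ - V1 μ'| ≤ L * W1 (μ : Measure S) (μ' : Measure S))
    (hV2b : ∃ M, ∀ μ, |V2 μ| ≤ M)
    (hV2lip : ∀ μ μ' : ProbabilityMeasure S,
      |V2 μ - V2 μ'| ≤ L * W1 (μ : Measure S) (μ' : Measure S)) :
    (⨆ μ : ProbabilityMeasure S, |BellmanT P0 β rbar Fbar V1 μ - BellmanT P0 β rbar Fbar V2 μ|)
      ≤ β * ⨆ μ : ProbabilityMeasure S, |V1 μ - V2 μ| :=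
  stmt_10_general P0 Fbar CF hFlip rbar β hβ0 L V1 V2 hV1b hV1lip hV2b hV2lip
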